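/- Let α = (α_i)_{i≥0} be the integer sequence with α_i = 3 - i, and consider the generalized Pascal triangle P_{α,α}(n). Then for every positive integer n, det(P_{α,α}(n)) = F(2n+2), where F denotes the Fibonacci sequence with F(0) = 0, F(1) = 1. -/

import Mathlib

/-!
If `f` is a Toeplitz array (`f (k+1) (l+1) = f k l`), then `Q i j = ∑_{k,l} C(i,k) f k l C(j,l)`
satisfies Pascal's recurrence `Q (i+1) (j+1) = Q i (j+1) + Q (i+1) j`. Hence
`P_{α̌,β̌}(n) = L T_{α,β}(n) Lᵀ`, where `α̌` is the binomial transform of `α` and `L` the unipotent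
Pascal matrix, and `det P_{α̌,β̌}(n) = det T_{α,β}(n)`.

The sequence `i ↦ 3 - i` is the binomial transform of `3, -1, 0, 0, …`, so here `T` is tridiagonal
with `3` on the diagonal and `-1` beside it. Expanding along the first row gives
`D (n+2) = 3 D (n+1) - D n`, the recurrence of the even-indexed Fibonacci numbers.
-/

open Matrix

/-- Entry `P_{i,j}` of the generalized Pascal triangle associated to sequences `α`, `β`:
`P_{i,0} = α i`, `P_{0,j} = β j`, and `P_{i,j} = P_{i-1,j} + P_{i,j-1}` for `i, j ≥ 1`. -/
def pascalEntry {R : Type*} [CommRing R] (α β : ℕ → R) : ℕ → ℕ → R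
  | i, 0 => α i
  | 0, j + 1 => β (j + 1)
  | i + 1, j + 1 => pascalEntry α β i (j + 1) + pascalEntry α β (i + 1) j

/-- The generalized Pascal triangle `P_{α,β}(n)`. -/
def genPascal {R : Type*} [CommRing R] (α β : ℕ → R) (n : ℕ) :
    Matrix (Fin n) (Fin n) R :=
  Matrix.of fun i j => pascalEntry α β (i : ℕ) (j : ℕ)

/-- The Töplitz matrix `T_{α,β}(n)`: `t_{i,j} = α_{i-j}` if `i ≥ j`, else `β_{j-i}`. -/
def toeplitz {R : Type*} [CommRing R] (α β : ℕ → R) (n : ℕ) :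
    Matrix (Fin n) (Fin n) R :=
  Matrix.of fun i j => if (j : ℕ) ≤ (i : ℕ) then α ((i : ℕ) - (j : ℕ)) else β ((j : ℕ) - (i : ℕ))

/-- The unipotent lower triangular matrix `L(n)` with `L_{i,j} = C(i,j)` for `i ≥ j`. -/
def lowerL (R : Type*) [CommRing R] (n : ℕ) : Matrix (Fin n) (Fin n) R :=
  Matrix.of fun i j => if (j : ℕ) ≤ (i : ℕ) then ((i : ℕ).choose (j : ℕ) : R) else 0

/-- The binomial inverse transform `α̂_i = ∑_{k=0}^{i} (-1)^{i+k} C(i,k) α_k`. -/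
def hatSeq {R : Type*} [CommRing R] (α : ℕ → R) (i : ℕ) : R :=
  ∑ k ∈ Finset.range (i + 1), (-1 : R) ^ (i + k) * (i.choose k : R) * α k

/-- The binomial transform `α̌_i = ∑_{k=0}^{i} C(i,k) α_k`. -/
def checkSeq {R : Type*} [CommRing R] (α : ℕ → R) (i : ℕ) : R :=
  ∑ k ∈ Finset.range (i + 1), (i.choose k : R) * α k

open Finset

variable {R : Type*}

def toeplitzEntry (a b : ℕ → R) (k l : ℕ) : R :=
  if l ≤ k then a (k - l) else b (l - k)

theorem toeplitzEntry_succ_succ (a b : ℕ → R) (k l : ℕ) :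
    toeplitzEntry a b (k + 1) (l + 1) = toeplitzEntry a b k l := by
  simp [toeplitzEntry]

theorem toeplitzEntry_zero_right (a b : ℕ → R) (k : ℕ) : toeplitzEntry a b k 0 = a k := by
  simp [toeplitzEntry]

theorem toeplitzEntry_zero_left {a b : ℕ → R} (h : a 0 = b 0) (l : ℕ) :
    toeplitzEntry a b 0 l = b l := by
  cases l <;> simp [toeplitzEntry, h]

variable [CommRing R]

theorem toeplitz_eq_of_toeplitzEntry (a b : ℕ → R) (n : ℕ) :
    toeplitz a b n = of fun k l : Fin n => toeplitzEntry a b k l :=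
  rfl

theorem sum_range_choose_succ_mul (g : ℕ → R) (i : ℕ) :
    ∑ k ∈ range (i + 2), ((i + 1).choose k : R) * g k =
      ∑ k ∈ range (i + 1), (i.choose k : R) * (g k + g (k + 1)) := by
  have hshift : ∑ k ∈ range (i + 1), (i.choose (k + 1) : R) * g (k + 1) + g 0 =
      ∑ k ∈ range (i + 1), (i.choose k : R) * g k := by
    rw [sum_range_succ _ i, Nat.choose_succ_self, Nat.cast_zero, zero_mul, add_zero,
      sum_range_succ' _ i, Nat.choose_zero_right, Nat.cast_one, one_mul]
  simp only [mul_add, sum_add_distrib, ← hshift, sum_range_succ' _ (i + 1), Nat.choose_succ_succ,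
    Nat.cast_add, add_mul, Nat.choose_zero_right, Nat.cast_one, one_mul]
  ring

def checkSeq₂ (f : ℕ → ℕ → R) (i j : ℕ) : R :=
  ∑ k ∈ range (i + 1), (i.choose k : R) * ∑ l ∈ range (j + 1), (j.choose l : R) * f k l

theorem checkSeq₂_succ_left (f : ℕ → ℕ → R) (i j : ℕ) :
    checkSeq₂ f (i + 1) j = checkSeq₂ (fun k l => f k l + f (k + 1) l) i j := by
  simp only [checkSeq₂, sum_range_choose_succ_mul, mul_add, sum_add_distrib]

theorem checkSeq₂_succ_right (f : ℕ → ℕ → R) (i j : ℕ) :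
    checkSeq₂ f i (j + 1) = checkSeq₂ (fun k l => f k l + f k (l + 1)) i j := by
  simp only [checkSeq₂, sum_range_choose_succ_mul]

theorem checkSeq₂_add (f g : ℕ → ℕ → R) (i j : ℕ) :
    checkSeq₂ (fun k l => f k l + g k l) i j = checkSeq₂ f i j + checkSeq₂ g i j := by
  simp only [checkSeq₂, mul_add, sum_add_distrib]

theorem checkSeq₂_zero_right (f : ℕ → ℕ → R) (i : ℕ) :
    checkSeq₂ f i 0 = checkSeq (f · 0) i := by
  simp [checkSeq₂, checkSeq]

theorem checkSeq₂_zero_left (f : ℕ → ℕ → R) (j : ℕ) :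
    checkSeq₂ f 0 j = checkSeq (f 0 ·) j := by
  simp [checkSeq₂, checkSeq]

theorem checkSeq₂_add_pascal {f : ℕ → ℕ → R} (hf : ∀ k l, f (k + 1) (l + 1) = f k l)
    (i j : ℕ) :
    checkSeq₂ f (i + 1) (j + 1) = checkSeq₂ f i (j + 1) + checkSeq₂ f (i + 1) j :=
  calc checkSeq₂ f (i + 1) (j + 1)
      = checkSeq₂ f i (j + 1) + checkSeq₂ (fun k l => f (k + 1) l) i (j + 1) := by
        rw [checkSeq₂_succ_left, checkSeq₂_add]
    _ = checkSeq₂ f i (j + 1) + checkSeq₂ (fun k l => f k l + f (k + 1) l) i j := by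
        rw [checkSeq₂_succ_right (fun k l => f (k + 1) l)]
        simp only [hf, add_comm]
    _ = checkSeq₂ f i (j + 1) + checkSeq₂ f (i + 1) j := by
        rw [checkSeq₂_succ_left]

theorem eq_pascalEntry {F : ℕ → ℕ → R}
    (hF : ∀ i j, F (i + 1) (j + 1) = F i (j + 1) + F (i + 1) j) (i j : ℕ) :
    F i j = pascalEntry (F · 0) (F 0 ·) i j := by
  induction i, j using pascalEntry.induct with
  | case1 i => rw [pascalEntry]
  | case2 j => rw [pascalEntry]
  | case3 i j ih₁ ih₂ => rw [pascalEntry, hF, ih₁, ih₂]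

theorem pascalEntry_checkSeq {f : ℕ → ℕ → R} (hf : ∀ k l, f (k + 1) (l + 1) = f k l)
    (i j : ℕ) :
    pascalEntry (checkSeq (f · 0)) (checkSeq (f 0 ·)) i j = checkSeq₂ f i j := by
  have h := eq_pascalEntry (checkSeq₂_add_pascal hf) i j
  simp only [checkSeq₂_zero_right, checkSeq₂_zero_left] at h
  exact h.symm

theorem lowerL_apply {n : ℕ} (i k : Fin n) : lowerL R n i k = ((i : ℕ).choose k : R) := by
  rw [lowerL, of_apply, ite_eq_left_iff]
  intro hik
  rw [Nat.choose_eq_zero_of_lt (not_le.1 hik), Nat.cast_zero]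

theorem sum_fin_choose_mul {n i : ℕ} (hi : i < n) (g : ℕ → R) :
    ∑ k : Fin n, (i.choose k : R) * g k = ∑ k ∈ range (i + 1), (i.choose k : R) * g k := by
  rw [Fin.sum_univ_eq_sum_range (fun k => (i.choose k : R) * g k)]
  refine (sum_subset (range_subset_range.2 hi) fun k _ hk => ?_).symm
  rw [Nat.choose_eq_zero_of_lt (by simpa using hk), Nat.cast_zero, zero_mul]

theorem lowerL_mul_mul_transpose_apply {n : ℕ} (f : ℕ → ℕ → R) (i j : Fin n) :
    (lowerL R n * of (fun k l : Fin n => f k l) * (lowerL R n)ᵀ) i j = checkSeq₂ f i j := by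
  rw [Matrix.mul_assoc]
  simp only [mul_apply, transpose_apply, of_apply, lowerL_apply]
  rw [checkSeq₂,
    sum_fin_choose_mul i.isLt (fun k => ∑ l : Fin n, f k l * ((j : ℕ).choose l : R))]
  refine sum_congr rfl fun k _ => ?_
  rw [← sum_fin_choose_mul j.isLt (f k)]
  simp only [mul_comm]

theorem genPascal_checkSeq {a b : ℕ → R} (h : a 0 = b 0) (n : ℕ) :
    genPascal (checkSeq a) (checkSeq b) n = lowerL R n * toeplitz a b n * (lowerL R n)ᵀ := by
  ext i j
  rw [toeplitz_eq_of_toeplitzEntry, lowerL_mul_mul_transpose_apply,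
    ← pascalEntry_checkSeq (toeplitzEntry_succ_succ a b)]
  simp only [toeplitzEntry_zero_right, toeplitzEntry_zero_left h]
  rfl

theorem det_lowerL (n : ℕ) : (lowerL R n).det = 1 := by
  rw [det_of_isLowerTriangular _ fun i k (hik : i < k) => by
    rw [lowerL_apply, Nat.choose_eq_zero_of_lt hik, Nat.cast_zero]]
  simp [lowerL_apply]

theorem toeplitz_submatrix_succ (a b : ℕ → R) (n : ℕ) :
    (toeplitz a b (n + 1)).submatrix Fin.succ Fin.succ = toeplitz a b n := by
  ext k l
  simp [toeplitz_eq_of_toeplitzEntry, toeplitzEntry_succ_succ]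

theorem det_toeplitz_tridiagonal {a b : ℕ → R} (ha : ∀ k, 2 ≤ k → a k = 0)
    (hb : ∀ k, 2 ≤ k → b k = 0) (n : ℕ) :
    (toeplitz a b (n + 2)).det =
      a 0 * (toeplitz a b (n + 1)).det - a 1 * b 1 * (toeplitz a b n).det := by
  set T := toeplitz a b (n + 2)
  have hminor :
      (T.submatrix Fin.succ (Fin.succ 0).succAbove).det = a 1 * (toeplitz a b n).det := by
    have hcol (i : Fin n) : T i.succ.succ ((Fin.succ 0).succAbove 0) = 0 := by
      simp [T, toeplitz, ha]
    have hrest :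
        (T.submatrix Fin.succ (Fin.succ 0).succAbove).submatrix (Fin.succAbove 0) Fin.succ =
          toeplitz a b n := by
      ext k l
      simp [T, toeplitz, Fin.succAbove]
    rw [det_succ_column_zero, Fin.sum_univ_succ]
    simp only [submatrix_apply, hcol, mul_zero, zero_mul, sum_const_zero, add_zero, hrest]
    simp [T, toeplitz]
  have hrow (i : Fin n) : T 0 i.succ.succ = 0 := by
    simp [T, toeplitz, hb]
  rw [det_succ_row_zero, Fin.sum_univ_succ, Fin.sum_univ_succ, hminor, Fin.succAbove_zero,
    toeplitz_submatrix_succ]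
  have h00 : T 0 0 = a 0 := by simp [T, toeplitz]
  have h01 : T 0 1 = b 1 := by simp [T, toeplitz]
  simp only [hrow, mul_zero, zero_mul, sum_const_zero, add_zero, Fin.succ_zero_eq_one, h00, h01,
    Fin.val_zero, Fin.val_one, pow_zero, pow_one]
  ring

theorem Nat.fib_add_four_add_fib (m : ℕ) :
    Nat.fib (m + 4) + Nat.fib m = 3 * Nat.fib (m + 2) := by
  have h₀ : Nat.fib (m + 2) = Nat.fib m + Nat.fib (m + 1) := Nat.fib_add_two
  have h₁ : Nat.fib (m + 3) = Nat.fib (m + 1) + Nat.fib (m + 2) := Nat.fib_add_two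
  have h₂ : Nat.fib (m + 4) = Nat.fib (m + 2) + Nat.fib (m + 3) := Nat.fib_add_two
  omega

def hatSeqThreeSub : ℕ → ℤ
  | 0 => 3
  | 1 => -1
  | _ + 2 => 0

theorem checkSeq_hatSeqThreeSub : checkSeq hatSeqThreeSub = fun i : ℕ => 3 - (i : ℤ) := by
  funext i
  cases i with
  | zero => simp [checkSeq, hatSeqThreeSub]
  | succ i =>
    rw [checkSeq, sum_range_succ', sum_range_succ']
    simp only [hatSeqThreeSub, mul_zero, sum_const_zero, zero_add, Nat.choose_one_right,
      Nat.choose_zero_right]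
    push_cast
    ring

theorem det_toeplitz_hatSeqThreeSub (n : ℕ) :
    (toeplitz hatSeqThreeSub hatSeqThreeSub n).det = Nat.fib (2 * n + 2) := by
  have hzero : ∀ k, 2 ≤ k → hatSeqThreeSub k = 0 := fun k hk => by
    obtain ⟨k, rfl⟩ := Nat.exists_eq_add_of_le' hk
    rfl
  induction n using Nat.twoStepInduction with
  | zero => simp
  | one =>
    rw [show Nat.fib (2 * 1 + 2) = 3 from rfl]
    simp [toeplitz, hatSeqThreeSub]
  | more n ih₁ ih₂ =>
    have hfib : (Nat.fib (2 * n + 2 + 4) : ℤ) + Nat.fib (2 * n + 2) =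
        3 * Nat.fib (2 * n + 2 + 2) := by
      exact_mod_cast Nat.fib_add_four_add_fib _
    rw [det_toeplitz_tridiagonal hzero hzero, ih₂, ih₁]
    simp only [hatSeqThreeSub]
    linear_combination -hfib

theorem det_genPascal_fib_even_general (n : ℕ) :
    (genPascal (fun i => 3 - (i : ℤ)) (fun i => 3 - (i : ℤ)) n).det =
      (Nat.fib (2 * n + 2) : ℤ) := by
  rw [← checkSeq_hatSeqThreeSub, genPascal_checkSeq rfl, det_mul, det_mul, det_transpose,
    det_lowerL, det_toeplitz_hatSeqThreeSub, one_mul, mul_one]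

/-- for `α_i = 3 - i`, `det(P_{α,α}(n)) = F(2n+2)`. -/
theorem det_genPascal_fib_even (n : ℕ) (hn : 0 < n) :
    (genPascal (fun i => 3 - (i : ℤ)) (fun i => 3 - (i : ℤ)) n).det =
      (Nat.fib (2 * n + 2) : ℤ) :=
  det_genPascal_fib_even_general n
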